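/- arXiv:2206.03677 — 14 statements merged into one kernel-verified Lean document; each statement's English description precedes it below -/
import Mathlib

section
/- In the logic IL⁻ (the sublogic of interpretability logic with axioms G1 (tautologies), G2 (Box distribution), G3 (Löb), J3 ((A ▷ C) ∧ (B ▷ C) → (A ∨ B) ▷ C), J6 (□A ↔ (¬A ▷ ⊥)), and rules Modus Ponens, Necessitation, R1 (from A → B infer (C ▷ A) → (C ▷ B)), R2 (from A → B infer (B ▷ C) → (A ▷ C))), the schema □(A → B) → (B ▷ C → A ▷ C) is provable. -/
/-- Formulas of the language L(□,▷) of interpretability logic. -/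
inductive Fml : Type
  | bot : Fml
  | var : ℕ → Fml
  | imp : Fml → Fml → Fml
  | box : Fml → Fml
  | rhd : Fml → Fml → Fml
  deriving DecidableEq

namespace Fml
def neg (A : Fml) : Fml := A.imp bot
def top : Fml := Fml.bot.imp Fml.bot
def or (A B : Fml) : Fml := A.neg.imp B
def and (A B : Fml) : Fml := (A.imp B.neg).neg
def dia (A : Fml) : Fml := (A.neg.box).neg
end Fml

/-- A formula is a propositional tautology if every Boolean valuation that treats
⊥ and → classically (and is otherwise arbitrary on atoms, boxed and ▷-formulas)
makes it true. -/
def Taut (A : Fml) : Prop :=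
  ∀ v : Fml → Bool, v Fml.bot = false →
    (∀ B C : Fml, v (B.imp C) = (!(v B) || v C)) → v A = true

/-- Provability in IL⁻ extended by an additional set `Ax` of axioms.
Axioms: G1 (tautologies), G2, G3 (Löb), J3, J6 (both directions);
rules: modus ponens, necessitation, R1 and R2. -/
inductive ILMinus (Ax : Fml → Prop) : Fml → Prop
  | ax {A : Fml} : Ax A → ILMinus Ax A
  | taut {A : Fml} : Taut A → ILMinus Ax A
  | G2 (A B : Fml) : ILMinus Ax (((A.imp B).box).imp ((A.box).imp (B.box)))
  | G3 (A : Fml) : ILMinus Ax ((((A.box).imp A).box).imp (A.box))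
  | J3 (A B C : Fml) : ILMinus Ax (((A.rhd C).and (B.rhd C)).imp ((A.or B).rhd C))
  | J6a (A : Fml) : ILMinus Ax ((A.box).imp ((A.neg).rhd Fml.bot))
  | J6b (A : Fml) : ILMinus Ax (((A.neg).rhd Fml.bot).imp (A.box))
  | mp {A B : Fml} : ILMinus Ax (A.imp B) → ILMinus Ax A → ILMinus Ax B
  | nec {A : Fml} : ILMinus Ax A → ILMinus Ax (A.box)
  | R1 {A B : Fml} (C : Fml) :
      ILMinus Ax (A.imp B) → ILMinus Ax ((C.rhd A).imp (C.rhd B))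
  | R2 {A B : Fml} (C : Fml) :
      ILMinus Ax (A.imp B) → ILMinus Ax ((B.rhd C).imp (A.rhd C))

/-- The axiom schema J1 : □(A→B) → A▷B. -/
def J1Ax : Fml → Prop := fun F => ∃ A B : Fml, F = ((A.imp B).box).imp (A.rhd B)

/-- The axiom schema J2 : (A▷B)∧(B▷C) → A▷C. -/
def J2Ax : Fml → Prop := fun F => ∃ A B C : Fml, F = ((A.rhd B).and (B.rhd C)).imp (A.rhd C)

/-- The axiom schema J2₊ : (A▷(B∨C))∧(B▷C) → A▷C. -/
def J2plusAx : Fml → Prop :=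
  fun F => ∃ A B C : Fml, F = ((A.rhd (B.or C)).and (B.rhd C)).imp (A.rhd C)

/-- The axiom schema J5 : ◇A ▷ A. -/
def J5Ax : Fml → Prop := fun F => ∃ A : Fml, F = (A.dia).rhd A

/-- In IL⁻, the schema □(A → B) → (B ▷ C → A ▷ C) is provable. -/
theorem ILMinus_box_imp_rhd (A B C : Fml) :
    ILMinus (fun _ => False) (((A.imp B).box).imp ((B.rhd C).imp (A.rhd C))) := by
  -- atoms
  set p := (A.imp B).box with hp
  have h1 : ILMinus (fun _ => False) (((A.imp B).box).imp (((A.imp B).neg).rhd Fml.bot)) :=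
    ILMinus.J6a (A.imp B)
  have hbotC : ILMinus (fun _ => False) (Fml.bot.imp C) := by
    apply ILMinus.taut
    intro v hb hi
    simp [hi, hb]
  have h2 : ILMinus (fun _ => False)
      ((((A.imp B).neg).rhd Fml.bot).imp (((A.imp B).neg).rhd C)) :=
    ILMinus.R1 _ hbotC
  have h3 : ILMinus (fun _ => False)
      (((((A.imp B).neg).rhd C).and (B.rhd C)).imp ((((A.imp B).neg).or B).rhd C)) :=
    ILMinus.J3 _ _ _
  have htaut2 : ILMinus (fun _ => False) (A.imp (((A.imp B).neg).or B)) := by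
    apply ILMinus.taut
    intro v hb hi
    simp only [Fml.or, Fml.neg, hi, hb]
    cases v A <;> cases v B <;> rfl
  have h4 : ILMinus (fun _ => False)
      (((((A.imp B).neg).or B).rhd C).imp (A.rhd C)) :=
    ILMinus.R2 _ htaut2
  -- chain via a propositional tautology
  have hchain : ILMinus (fun _ => False)
      ((((A.imp B).box).imp (((A.imp B).neg).rhd Fml.bot)).imp
        (((((A.imp B).neg).rhd Fml.bot).imp (((A.imp B).neg).rhd C)).imp
          ((((((A.imp B).neg).rhd C).and (B.rhd C)).imp ((((A.imp B).neg).or B).rhd C)).imp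
            ((((((A.imp B).neg).or B).rhd C).imp (A.rhd C)).imp
              (((A.imp B).box).imp ((B.rhd C).imp (A.rhd C))))))) := by
    apply ILMinus.taut
    intro v hb hi
    simp only [Fml.and, Fml.neg, hi, hb]
    cases v ((A.imp B).box) <;>
      cases v (((A.imp B).imp Fml.bot).rhd Fml.bot) <;>
        cases v (((A.imp B).imp Fml.bot).rhd C) <;>
          cases v (B.rhd C) <;>
            cases v ((((A.imp B).imp Fml.bot).or B).rhd C) <;>
              cases v (A.rhd C) <;> rfl
  exact (((hchain.mp h1).mp h2).mp h3).mp h4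
end

section
/- The logic IL⁻ extended with J2₊ proves the schema J4₊: □(A → B) → (C ▷ A → C ▷ B). -/
/-- IL⁻(J2₊) proves the schema J4₊ : □(A → B) → (C ▷ A → C ▷ B). -/
theorem ILMinus_J2plus_proves_J4plus (A B C : Fml) :
    ILMinus J2plusAx (((A.imp B).box).imp ((C.rhd A).imp (C.rhd B))) := by
  set N := (A.imp B).neg with hN
  have h1 := ILMinus.J6a (Ax := J2plusAx) (A.imp B)
  have h2 : ILMinus J2plusAx ((N.rhd Fml.bot).imp (N.rhd B)) := by
    apply ILMinus.R1
    apply ILMinus.taut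
    intro v hbot himp
    simp [himp, hbot]
  have h3 : ILMinus J2plusAx ((C.rhd A).imp (C.rhd (N.or B))) := by
    apply ILMinus.R1
    apply ILMinus.taut
    intro v hbot himp
    simp only [hN, Fml.or, Fml.neg, himp, hbot]
    cases v A <;> cases v B <;> simp
  have h4 : ILMinus J2plusAx (((C.rhd (N.or B)).and (N.rhd B)).imp (C.rhd B)) :=
    ILMinus.ax ⟨C, N, B, rfl⟩
  have T : ILMinus J2plusAx
      ((((A.imp B).box).imp (N.rhd Fml.bot)).imp
        (((N.rhd Fml.bot).imp (N.rhd B)).imp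
          (((C.rhd A).imp (C.rhd (N.or B))).imp
            ((((C.rhd (N.or B)).and (N.rhd B)).imp (C.rhd B)).imp
              (((A.imp B).box).imp ((C.rhd A).imp (C.rhd B))))))) := by
    apply ILMinus.taut
    intro v hbot himp
    simp only [Fml.and, Fml.neg, himp, hbot]
    cases v ((A.imp B).box) <;> cases v (N.rhd Fml.bot) <;> cases v (N.rhd B) <;>
      cases v (C.rhd A) <;> cases v (C.rhd (N.or B)) <;> cases v (C.rhd B) <;> simp
  exact (((T.mp h1).mp h2).mp h3).mp h4
end

section
/- Let F = (W, R, {S_w}) be an IL⁻-frame. The schema J1: □(A→B) → A▷B is valid in F if and only if for all x, y ∈ W, x R y implies y S_x y. -/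
/-- An IL⁻-frame: W nonempty, R transitive and conversely well-founded,
and S_w ⊆ R[w] × W for each w (here `S w x y` means x S_w y). -/
structure ILFrame where
  W : Type
  R : W → W → Prop
  S : W → W → W → Prop
  ne : Nonempty W
  trans : Transitive R
  cwf : WellFounded (fun x y => R y x)
  S_dom : ∀ w x y, S w x y → R w x

/-- Satisfaction in a model over raw relational data. -/
def Sat {W : Type} (R : W → W → Prop) (S : W → W → W → Prop)
    (V : W → ℕ → Prop) : W → Fml → Prop
  | _, .bot => False
  | w, .var n => V w n
  | w, .imp A B => Sat R S V w A → Sat R S V w B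
  | w, .box A => ∀ x, R w x → Sat R S V x A
  | w, .rhd A B => ∀ x, R w x → Sat R S V x A → ∃ y, S w x y ∧ Sat R S V y B

/-- A formula is valid in an IL⁻-frame if it is satisfied at every world of
every model based on the frame. -/
def Valid (F : ILFrame) (A : Fml) : Prop :=
  ∀ (V : F.W → ℕ → Prop) (w : F.W), Sat F.R F.S V w A

/-- J1 : □(A→B) → A▷B is valid in an IL⁻-frame iff x R y implies y S_x y. -/
theorem J1_valid_iff (F : ILFrame) :
    (∀ A B : Fml, Valid F (((A.imp B).box).imp (A.rhd B))) ↔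
      ∀ x y : F.W, F.R x y → F.S x y y := by
  constructor
  · intro h x y hxy
    have := h (.var 0) (.var 0) (fun w n => w = y) x
    simp only [Sat] at this
    obtain ⟨z, hz, hzy⟩ := this (fun _ _ h => h) y hxy rfl
    subst hzy; exact hz
  · intro h A B V w
    simp only [Sat]
    intro hbox x hwx hA
    exact ⟨x, h w x hwx, hbox x hwx hA⟩
end

section
/- Let F = (W, R, {S_w}) be an IL⁻-frame. The schema J4₊: □(A→B) → (C▷A → C▷B) is valid in F if and only if for all x, y, z ∈ W, y S_x z implies x R z. -/
/-- J4₊ : □(A→B) → (C▷A → C▷B) is valid in an IL⁻-frame iff y S_x z implies x R z. -/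
theorem J4plus_valid_iff (F : ILFrame) :
    (∀ A B C : Fml, Valid F (((A.imp B).box).imp ((C.rhd A).imp (C.rhd B)))) ↔
      ∀ x y z : F.W, F.S x y z → F.R x z := by
  constructor
  · intro h x y z hS
    have hRxy : F.R x y := F.S_dom x y z hS
    set V : F.W → ℕ → Prop := fun u n =>
      (n = 0 ∧ u = y) ∨ (n = 1 ∧ u = z) ∨ (n = 2 ∧ u = z ∧ F.R x z) with hV
    have H := h (.var 1) (.var 2) (.var 0) V x
    simp only [Sat] at H
    have hbox : ∀ u, F.R x u → V u 1 → V u 2 := by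
      intro u hu h1
      rcases h1 with ⟨h0,_⟩|⟨_,h1⟩|⟨h0,_⟩
      · exact absurd h0 (by decide)
      · subst h1; exact Or.inr (Or.inr ⟨rfl, rfl, hu⟩)
      · exact absurd h0 (by decide)
    have hrhdA : ∀ u, F.R x u → V u 0 → ∃ w, F.S x u w ∧ V w 1 := by
      intro u hu h0
      rcases h0 with ⟨_,h1⟩|⟨h0,_⟩|⟨h0,_⟩
      · subst h1; exact ⟨z, hS, Or.inr (Or.inl ⟨rfl, rfl⟩)⟩
      · exact absurd h0 (by decide)
      · exact absurd h0 (by decide)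
    obtain ⟨w, hw, hw2⟩ := H hbox hrhdA y hRxy (Or.inl ⟨rfl, rfl⟩)
    rcases hw2 with ⟨h0,_⟩|⟨h0,_⟩|⟨_,_,h2⟩
    · exact absurd h0 (by decide)
    · exact absurd h0 (by decide)
    · exact h2
  · intro h A B C V w
    intro hbox hrhdA u hu hC
    obtain ⟨v, hv, hvA⟩ := hrhdA u hu hC
    exact ⟨v, hv, hbox v (h w u v hv) hvA⟩
end

section
/- Let F = (W, R, {S_w}) be an IL⁻-frame. The schema J5: ◇A ▷ A is valid in F if and only if for all x, y, z ∈ W, x R y and y R z imply y S_x z. -/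
/-- J5 : ◇A ▷ A is valid in an IL⁻-frame iff x R y and y R z imply y S_x z. -/
theorem J5_valid_iff (F : ILFrame) :
    (∀ A : Fml, Valid F ((A.dia).rhd A)) ↔
      ∀ x y z : F.W, F.R x y → F.R y z → F.S x y z := by
  constructor
  · intro h x y z hxy hyz
    have hv := h (Fml.var 0) (fun w _ => w = z) x y hxy
    simp only [Fml.dia, Fml.neg, Sat] at hv
    obtain ⟨y', hS, hy'⟩ := hv (fun hall => hall z hyz rfl)
    exact hy' ▸ hS
  · intro h A V w x hwx hx
    simp only [Fml.dia, Fml.neg, Sat] at hx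
    by_contra hc
    push_neg at hc
    exact hx (fun z hxz hz => hc z (h w x z hwx hxz) hz)
end

section
/- Let F = (W, R, {S_w}) be an IL⁻-frame. The schema J2₊: (A▷(B∨C)) ∧ (B▷C) → (A▷C) is valid in F if and only if J4₊ (□(A→B)→(C▷A→C▷B)) is valid in F and each relation S_w is transitive (for all w, x, y, z: x S_w y and y S_w z imply x S_w z). -/
/-- J2₊ is valid in an IL⁻-frame iff J4₊ is valid and each S_w is transitive. -/
theorem J2plus_valid_iff (F : ILFrame) :
    (∀ A B C : Fml, Valid F (((A.rhd (B.or C)).and (B.rhd C)).imp (A.rhd C))) ↔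
      ((∀ A B C : Fml, Valid F (((A.imp B).box).imp ((C.rhd A).imp (C.rhd B)))) ∧
        ∀ w x y z : F.W, F.S w x y → F.S w y z → F.S w x z) := by
  classical
  constructor
  · intro hJ2
    refine ⟨?_, ?_⟩
    · -- J4₊ is valid
      intro A B C V w
      simp only [Sat]
      intro hbox hCA x hx hxC
      have h2 := hJ2 (.var 0) (.var 1) (.var 2)
        (fun a n =>
          if n = 0 then Sat F.R F.S V a C
          else if n = 1 then Sat F.R F.S V a A ∧ ¬ Sat F.R F.S V a B
          else Sat F.R F.S V a B) w
      simp only [Sat, Fml.and, Fml.or, Fml.neg] at h2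
      simp only [show ¬((1:ℕ)=0) from by norm_num, show ¬((2:ℕ)=0) from by norm_num,
        show ¬((2:ℕ)=1) from by norm_num, if_true, if_false, if_pos rfl, if_neg] at h2
      have h3 := h2 (fun hcon => hcon
        (fun u hu huC => by
          obtain ⟨y, hSy, hyA⟩ := hCA u hu huC
          by_cases hB : Sat F.R F.S V y B
          · exact ⟨y, hSy, fun _ => hB⟩
          · exact ⟨y, hSy, fun h1 => (h1 ⟨hyA, hB⟩).elim⟩)
        (fun u hu hu1 => absurd (hbox u hu hu1.1) hu1.2))
      exact h3 x hx hxC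
    · -- transitivity of S_w
      intro w x y z hxy hyz
      have h2 := hJ2 (.var 0) (.var 1) (.var 2)
        (fun a n => if n = 0 then a = x else if n = 1 then a = y else a = z) w
      simp only [Sat, Fml.and, Fml.or, Fml.neg] at h2
      simp only [show ¬((1:ℕ)=0) from by norm_num, show ¬((2:ℕ)=0) from by norm_num,
        show ¬((2:ℕ)=1) from by norm_num, if_true, if_false, if_pos rfl, if_neg] at h2
      have h3 := h2 (fun hcon => hcon
        (fun u hu hu0 => by
          subst hu0
          exact ⟨y, hxy, fun h1 => (h1 rfl).elim⟩)
        (fun u hu hu1 => by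
          subst hu1
          exact ⟨z, hyz, rfl⟩))
      obtain ⟨u, hSu, huz⟩ := h3 x (F.S_dom w x y hxy) rfl
      subst huz
      exact hSu
  · rintro ⟨hJ4, htrans⟩
    -- frame condition of J4₊ : S w x y → R w y
    have hcond : ∀ w x y : F.W, F.S w x y → F.R w y := by
      intro w x y hS
      by_contra hR
      have h2 := hJ4 (.var 0) .bot (.var 1)
        (fun a n => if n = 0 then a = y else a = x) w
      simp only [Sat, Fml.and, Fml.or, Fml.neg] at h2
      simp only [show ¬((1:ℕ)=0) from by norm_num, if_true, if_false, if_pos rfl,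
        if_neg] at h2
      have h3 := h2 (fun u hu hu0 => by subst hu0; exact hR hu)
        (fun u hu hu1 => by subst hu1; exact ⟨y, hS, rfl⟩)
      obtain ⟨v, _, hfalse⟩ := h3 x (F.S_dom w x y hS) rfl
      exact hfalse
    intro A B C V w
    simp only [Sat, Fml.and, Fml.or, Fml.neg]
    intro hcon x hx hxA
    by_contra hgoal
    apply hcon
    intro hABC hBC
    apply hgoal
    obtain ⟨y, hSy, hyBC⟩ := hABC x hx hxA
    by_cases hyB : Sat F.R F.S V y B
    · obtain ⟨z, hSz, hzC⟩ := hBC y (hcond w x y hSy) hyB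
      exact ⟨z, htrans w x y z hSy hSz, hzC⟩
    · exact ⟨y, hSy, hyBC (fun hB => absurd hB hyB)⟩
end

section
/- The logic IL⁻(J1, J5) proves the schema □(A ∨ ◇A) → (⊤ ▷ A). -/
section TautLemmas

lemma taut_imp_self (A : Fml) : Taut (A.imp A) := by
  intro v hb hi
  simp only [hi]
  cases v A <;> simp

lemma taut_bot_imp (A : Fml) : Taut (Fml.bot.imp A) := by
  intro v hb hi
  simp only [hi, hb]
  simp

lemma taut_top_orNot (X : Fml) : Taut (Fml.top.imp (X.or X.neg)) := by
  intro v hb hi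
  simp only [Fml.top, Fml.or, Fml.neg, hi, hb]
  cases v X <;> simp

lemma taut_andIntro (P Q : Fml) : Taut (P.imp (Q.imp (P.and Q))) := by
  intro v hb hi
  simp only [Fml.and, Fml.neg, hi, hb]
  cases hP : v P <;> cases hQ : v Q <;> simp

lemma taut_comp (X Y Z : Fml) : Taut ((X.imp Y).imp ((Y.imp Z).imp (X.imp Z))) := by
  intro v hb hi
  simp only [hi]
  cases v X <;> cases v Y <;> cases v Z <;> simp

lemma taut_glue (P H Q R S : Fml) :
    Taut (P.imp ((H.imp Q).imp (((P.and Q).imp R).imp ((R.imp S).imp (H.imp S))))) := by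
  intro v hb hi
  simp only [Fml.and, Fml.neg, hi, hb]
  cases v P <;> cases v H <;> cases v Q <;> cases v R <;> cases v S <;> simp

end TautLemmas

/-- IL⁻(J1, J5) proves the schema □(A ∨ ◇A) → (⊤ ▷ A). -/
theorem ILMinus_J1_J5_proves_uJ15 (A : Fml) :
    ILMinus (fun F => J1Ax F ∨ J5Ax F) (((A.or A.dia).box).imp (Fml.top.rhd A)) := by

  set Ax : Fml → Prop := fun F => J1Ax F ∨ J5Ax F with hAx
  have j1 : ∀ X Y : Fml, ILMinus Ax (((X.imp Y).box).imp (X.rhd Y)) :=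
    fun X Y => ILMinus.ax (Or.inl ⟨X, Y, rfl⟩)
  have tAA : ILMinus Ax (A.rhd A) :=
    ILMinus.mp (j1 A A) (ILMinus.nec (ILMinus.taut (taut_imp_self A)))
  have tDA : ILMinus Ax ((A.dia).rhd A) := ILMinus.ax (Or.inr ⟨A, rfl⟩)
  have tOA : ILMinus Ax ((A.or A.dia).rhd A) :=
    ILMinus.mp (ILMinus.J3 A A.dia A)
      (ILMinus.mp (ILMinus.mp (ILMinus.taut (taut_andIntro _ _)) tAA) tDA)
  have s2 : ILMinus Ax (((A.or A.dia).box).imp (((A.or A.dia).neg).rhd Fml.bot)) :=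
    ILMinus.J6a (A.or A.dia)
  have s3 : ILMinus Ax ((((A.or A.dia).neg).rhd Fml.bot).imp (((A.or A.dia).neg).rhd A)) :=
    ILMinus.R1 _ (ILMinus.taut (taut_bot_imp A))
  have s4 : ILMinus Ax (((A.or A.dia).box).imp (((A.or A.dia).neg).rhd A)) :=
    ILMinus.mp (ILMinus.mp (ILMinus.taut (taut_comp _ _ _)) s2) s3
  have s5 := ILMinus.J3 (Ax := Ax) (A.or A.dia) ((A.or A.dia).neg) A
  have s6 : ILMinus Ax ((((A.or A.dia).or ((A.or A.dia).neg)).rhd A).imp (Fml.top.rhd A)) :=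
    ILMinus.R2 A (ILMinus.taut (taut_top_orNot _))
  exact ILMinus.mp (ILMinus.mp (ILMinus.mp (ILMinus.mp
    (ILMinus.taut (taut_glue _ _ _ _ _)) tOA) s4) s5) s6
end

section
/- The logic IL⁻(J2, J5) proves the schema □(A → ◇B) → ((⊤ ▷ A) → (⊤ ▷ B)). -/
section Helpers
variable {Ax : Fml → Prop}

lemma IL_trans {P Q R : Fml} (h1 : ILMinus Ax (P.imp Q)) (h2 : ILMinus Ax (Q.imp R)) :
    ILMinus Ax (P.imp R) := by
  apply ILMinus.mp (ILMinus.mp (ILMinus.taut (A := (P.imp Q).imp ((Q.imp R).imp (P.imp R))) ?_) h1) h2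
  intro v hb hi
  simp only [hi, hb]
  cases v P <;> cases v Q <;> cases v R <;> rfl

/-- From ⊢ X→P and ⊢ Q conclude ⊢ X → P∧Q. -/
lemma IL_conj {X P Q : Fml} (h1 : ILMinus Ax (X.imp P)) (h2 : ILMinus Ax Q) :
    ILMinus Ax (X.imp (P.and Q)) := by
  apply ILMinus.mp (ILMinus.mp (ILMinus.taut
    (A := (X.imp P).imp (Q.imp (X.imp (P.and Q)))) ?_) h1) h2
  intro v hb hi
  simp only [Fml.and, Fml.neg, hi, hb]
  cases v X <;> cases v P <;> cases v Q <;> rfl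

/-- From ⊢ X→P and ⊢ (T∧P)→S conclude ⊢ X → (T → S). -/
lemma IL_curry {X P T S : Fml} (h1 : ILMinus Ax (X.imp P))
    (h2 : ILMinus Ax ((T.and P).imp S)) : ILMinus Ax (X.imp (T.imp S)) := by
  apply ILMinus.mp (ILMinus.mp (ILMinus.taut
    (A := (X.imp P).imp (((T.and P).imp S).imp (X.imp (T.imp S)))) ?_) h1) h2
  intro v hb hi
  simp only [Fml.and, Fml.neg, hi, hb]
  cases v X <;> cases v P <;> cases v T <;> cases v S <;> rfl

end Helpers


/-- IL⁻(J2, J5) proves the schema □(A → ◇B) → ((⊤▷A) → (⊤▷B)). -/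
theorem ILMinus_J2_J5_proves_uJ25 (A B : Fml) :
    ILMinus (fun F => J2Ax F ∨ J5Ax F)
      (((A.imp B.dia).box).imp ((Fml.top.rhd A).imp (Fml.top.rhd B))) := by
  set Ax : Fml → Prop := fun F => J2Ax F ∨ J5Ax F with hAx
  set D : Fml := A.and (B.neg.box) with hD
  set E : Fml := A.and B.dia with hE
  -- ⊢ (A→◇B) → ¬D
  have t1 : ILMinus Ax ((A.imp B.dia).imp D.neg) := by
    apply ILMinus.taut
    intro v hb hi
    simp only [hD, Fml.and, Fml.neg, Fml.dia, hi, hb]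
    cases v A <;> cases v ((B.imp Fml.bot).box) <;> rfl
  -- ⊢ □(A→◇B) → □¬D
  have s1 : ILMinus Ax (((A.imp B.dia).box).imp (D.neg.box)) :=
    (ILMinus.G2 _ _).mp (ILMinus.nec t1)
  -- ⊢ □¬D → (¬¬D ▷ ⊥)
  have s2 : ILMinus Ax ((D.neg.box).imp ((D.neg.neg).rhd Fml.bot)) := ILMinus.J6a D.neg
  -- ⊢ (¬¬D ▷ ⊥) → (D ▷ ⊥)
  have tdd : ILMinus Ax (D.imp D.neg.neg) := by
    apply ILMinus.taut
    intro v hb hi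
    simp only [Fml.neg, hi, hb]
    cases v D <;> rfl
  have s3 : ILMinus Ax (((D.neg.neg).rhd Fml.bot).imp (D.rhd Fml.bot)) := ILMinus.R2 _ tdd
  -- ⊢ (D ▷ ⊥) → (D ▷ B)
  have tb : ILMinus Ax (Fml.bot.imp B) := by
    apply ILMinus.taut
    intro v hb hi
    simp only [hi, hb]
    cases v B <;> rfl
  have s4 : ILMinus Ax ((D.rhd Fml.bot).imp (D.rhd B)) := ILMinus.R1 _ tb
  -- ⊢ □(A→◇B) → (D ▷ B)
  have sDB : ILMinus Ax (((A.imp B.dia).box).imp (D.rhd B)) :=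
    IL_trans (IL_trans (IL_trans s1 s2) s3) s4
  -- ⊢ E ▷ B  (via J5 and R2)
  have j5 : ILMinus Ax ((B.dia).rhd B) := ILMinus.ax (Or.inr ⟨B, rfl⟩)
  have te : ILMinus Ax (E.imp B.dia) := by
    apply ILMinus.taut
    intro v hb hi
    simp only [hE, Fml.and, Fml.neg, Fml.dia, hi, hb]
    cases v A <;> cases v ((B.imp Fml.bot).box) <;> rfl
  have sEB : ILMinus Ax (E.rhd B) := (ILMinus.R2 _ te).mp j5
  -- ⊢ □(A→◇B) → ((D▷B) ∧ (E▷B))  and then → ((D∨E)▷B)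
  have sConj : ILMinus Ax (((A.imp B.dia).box).imp ((D.rhd B).and (E.rhd B))) :=
    IL_conj sDB sEB
  have j3 : ILMinus Ax (((D.rhd B).and (E.rhd B)).imp ((D.or E).rhd B)) := ILMinus.J3 _ _ _
  -- ⊢ A → D ∨ E
  have ta : ILMinus Ax (A.imp (D.or E)) := by
    apply ILMinus.taut
    intro v hb hi
    simp only [hD, hE, Fml.or, Fml.and, Fml.neg, Fml.dia, hi, hb]
    cases v A <;> cases v ((B.imp Fml.bot).box) <;> rfl
  have s6 : ILMinus Ax (((D.or E).rhd B).imp (A.rhd B)) := ILMinus.R2 _ ta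
  -- ⊢ □(A→◇B) → (A ▷ B)
  have sAB : ILMinus Ax (((A.imp B.dia).box).imp (A.rhd B)) :=
    IL_trans (IL_trans sConj j3) s6
  -- J2 and currying
  have j2 : ILMinus Ax (((Fml.top.rhd A).and (A.rhd B)).imp (Fml.top.rhd B)) :=
    ILMinus.ax (Or.inl ⟨Fml.top, A, B, rfl⟩)
  exact IL_curry sAB j2
end

section
/- The logic il⁻ extended with uJ15 (□(A ∨ ◇A) → IA) proves the schema I1: I□⊥. -/
/-- Formulas of the language L(□,I) of unary interpretability logic. -/
inductive UFml : Type
  | bot : UFml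
  | var : ℕ → UFml
  | imp : UFml → UFml → UFml
  | box : UFml → UFml
  | I : UFml → UFml
  deriving DecidableEq

namespace UFml
def neg (A : UFml) : UFml := A.imp bot
def top : UFml := UFml.bot.imp UFml.bot
def or (A B : UFml) : UFml := A.neg.imp B
def and (A B : UFml) : UFml := (A.imp B.neg).neg
def dia (A : UFml) : UFml := (A.neg.box).neg
end UFml

/-- Propositional tautologies of L(□,I). -/
def UTaut (A : UFml) : Prop :=
  ∀ v : UFml → Bool, v UFml.bot = false →
    (∀ B C : UFml, v (B.imp C) = (!(v B) || v C)) → v A = true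

/-- Provability in il⁻ extended by an additional set `Ax` of axioms.
Axioms: G1' (tautologies), G2, G3 (Löb), uJ6 (□⊥ ↔ I⊥, both directions);
rules: modus ponens, necessitation, uR. -/
inductive IlMinus (Ax : UFml → Prop) : UFml → Prop
  | ax {A : UFml} : Ax A → IlMinus Ax A
  | taut {A : UFml} : UTaut A → IlMinus Ax A
  | G2 (A B : UFml) : IlMinus Ax (((A.imp B).box).imp ((A.box).imp (B.box)))
  | G3 (A : UFml) : IlMinus Ax ((((A.box).imp A).box).imp (A.box))
  | uJ6a : IlMinus Ax ((UFml.bot.box).imp (UFml.I UFml.bot))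
  | uJ6b : IlMinus Ax ((UFml.I UFml.bot).imp (UFml.bot.box))
  | mp {A B : UFml} : IlMinus Ax (A.imp B) → IlMinus Ax A → IlMinus Ax B
  | nec {A : UFml} : IlMinus Ax A → IlMinus Ax (A.box)
  | uR {A B : UFml} : IlMinus Ax (A.imp B) → IlMinus Ax ((UFml.I A).imp (UFml.I B))

/-- The axiom schema uJ1 : □A → IA. -/
def uJ1Ax : UFml → Prop := fun F => ∃ A : UFml, F = (A.box).imp (UFml.I A)

/-- The axiom schema uJ15 : □(A ∨ ◇A) → IA. -/
def uJ15Ax : UFml → Prop := fun F => ∃ A : UFml, F = ((A.or A.dia).box).imp (UFml.I A)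

/-- The axiom schema I1 : I□⊥. -/
def I1Ax : UFml → Prop := fun F => F = UFml.I (UFml.bot.box)

/-- The axiom schema I2 : □(A→B) → (IA → IB). -/
def I2Ax : UFml → Prop :=
  fun F => ∃ A B : UFml, F = ((A.imp B).box).imp ((UFml.I A).imp (UFml.I B))

/-- The axiom schema I3 : I(A ∨ ◇A) → IA. -/
def I3Ax : UFml → Prop := fun F => ∃ A : UFml, F = (UFml.I (A.or A.dia)).imp (UFml.I A)

/-- The axiom schema I4 : IA ∧ ◇⊤ → ◇A. -/
def I4Ax : UFml → Prop := fun F => ∃ A : UFml, F = ((UFml.I A).and UFml.top.dia).imp A.dia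

/-- De Rijke's unary interpretability logic il: axioms G1', G2, G3, I1, I2, I3, I4;
rules modus ponens and necessitation. -/
inductive Il : UFml → Prop
  | taut {A : UFml} : UTaut A → Il A
  | G2 (A B : UFml) : Il (((A.imp B).box).imp ((A.box).imp (B.box)))
  | G3 (A : UFml) : Il ((((A.box).imp A).box).imp (A.box))
  | I1 : Il (UFml.I (UFml.bot.box))
  | I2 (A B : UFml) : Il (((A.imp B).box).imp ((UFml.I A).imp (UFml.I B)))
  | I3 (A : UFml) : Il ((UFml.I (A.or A.dia)).imp (UFml.I A))
  | I4 (A : UFml) : Il (((UFml.I A).and UFml.top.dia).imp A.dia)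
  | mp {A B : UFml} : Il (A.imp B) → Il A → Il B
  | nec {A : UFml} : Il A → Il (A.box)

lemma taut_contra (A B : UFml) :
    UTaut ((A.imp B).imp ((B.imp .bot).imp (A.imp .bot))) := by
  intro v hb hi
  simp only [hi, hb]
  cases v A <;> cases v B <;> simp

/-- il⁻(uJ15) proves the schema I1 : I□⊥. -/
theorem ilMinus_uJ15_proves_I1 :
    IlMinus uJ15Ax (UFml.I (UFml.bot.box)) := by
  -- uJ15 with A = □⊥
  have h15 : IlMinus uJ15Ax ((((UFml.bot.box).or (UFml.bot.box).dia).box).imp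
      (UFml.I (UFml.bot.box))) := .ax ⟨UFml.bot.box, rfl⟩
  have hG3 := IlMinus.G3 (Ax := uJ15Ax) UFml.bot
  -- (□¬□⊥ → □⊥) → (¬□⊥ → ¬□¬□⊥)
  have hc : IlMinus uJ15Ax ((UFml.bot.box).or (UFml.bot.box).dia) :=
    .mp (.taut (taut_contra ((UFml.bot.box.imp UFml.bot).box) UFml.bot.box)) hG3
  exact h15.mp (hc.nec)
end

section
/- The logic il⁻ extended with I1 (I□⊥) and I2 (□(A→B) → (IA→IB)) proves the schema uJ15: □(A ∨ ◇A) → IA. -/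
/-- il⁻(I1, I2) proves the schema uJ15 : □(A ∨ ◇A) → IA. -/
theorem ilMinus_I1_I2_proves_uJ15 (A : UFml) :
    IlMinus (fun F => I1Ax F ∨ I2Ax F) (((A.or A.dia).box).imp (UFml.I A)) := by

  classical
  set Ax : UFml → Prop := fun F => I1Ax F ∨ I2Ax F with hAx
  -- □⊥ → □¬A
  have h1 : IlMinus Ax ((UFml.bot.box).imp (A.neg.box)) := by
    apply IlMinus.mp (IlMinus.G2 UFml.bot A.neg)
    apply IlMinus.nec
    apply IlMinus.taut
    intro v hbot himp
    simp [UFml.neg, himp, hbot]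
  -- (A ∨ ◇A) → (□⊥ → A)
  have h2 : IlMinus Ax ((A.or A.dia).imp ((UFml.bot.box).imp A)) := by
    refine IlMinus.mp ?_ h1
    apply IlMinus.taut
    intro v hbot himp
    simp only [UFml.or, UFml.dia, UFml.neg, himp, hbot]
    cases v A <;> cases v (UFml.bot.box) <;> cases v (UFml.box (A.imp UFml.bot)) <;> simp
  -- □(A ∨ ◇A) → □(□⊥ → A)
  have h3 : IlMinus Ax (((A.or A.dia).box).imp (((UFml.bot.box).imp A).box)) :=
    IlMinus.mp (IlMinus.G2 _ _) (IlMinus.nec h2)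
  -- I2 instance : □(□⊥ → A) → (I□⊥ → IA)
  have h4 : IlMinus Ax ((((UFml.bot.box).imp A).box).imp ((UFml.I (UFml.bot.box)).imp (UFml.I A))) :=
    IlMinus.ax (Or.inr ⟨UFml.bot.box, A, rfl⟩)
  -- I1 : I□⊥
  have h5 : IlMinus Ax (UFml.I (UFml.bot.box)) := IlMinus.ax (Or.inl rfl)
  -- chain: from P→Q, Q→(R→S), R conclude P→S
  have chain : IlMinus Ax
      ((((A.or A.dia).box).imp (((UFml.bot.box).imp A).box)).imp
        (((((UFml.bot.box).imp A).box).imp ((UFml.I (UFml.bot.box)).imp (UFml.I A))).imp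
          ((UFml.I (UFml.bot.box)).imp (((A.or A.dia).box).imp (UFml.I A))))) := by
    apply IlMinus.taut
    intro v hbot himp
    simp only [himp]
    cases v ((A.or A.dia).box) <;>
      cases v (((UFml.bot.box).imp A).box) <;>
      cases v (UFml.I (UFml.bot.box)) <;>
      cases v (UFml.I A) <;> simp
  exact IlMinus.mp (IlMinus.mp (IlMinus.mp chain h3) h4) h5
end

section
/- The logic il⁻ extended with I2 (□(A→B) → (IA→IB)) proves the schema I4: IA ∧ ◇⊤ → ◇A. -/
/-- il⁻(I2) proves the schema I4 : IA ∧ ◇⊤ → ◇A. -/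
theorem ilMinus_I2_proves_I4 (A : UFml) :
    IlMinus I2Ax (((UFml.I A).and UFml.top.dia).imp A.dia) := by
  -- T1 : □(A→⊥) → (IA → I⊥)
  have T1 : IlMinus I2Ax (((A.imp UFml.bot).box).imp
      ((UFml.I A).imp (UFml.I UFml.bot))) := .ax ⟨A, UFml.bot, rfl⟩
  -- T2 : I⊥ → □⊥
  have T2 : IlMinus I2Ax ((UFml.I UFml.bot).imp (UFml.bot.box)) := .uJ6b
  -- T3 : □⊥ → □(⊤→⊥)
  have T3 : IlMinus I2Ax ((UFml.bot.box).imp ((UFml.top.imp UFml.bot).box)) := by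
    have h0 : IlMinus I2Ax (UFml.bot.imp (UFml.top.imp UFml.bot)) := by
      apply IlMinus.taut
      intro v hbot himp
      simp [himp, hbot]
    exact .mp (.G2 UFml.bot (UFml.top.imp UFml.bot)) (.nec h0)
  -- tautological consequence
  have key : IlMinus I2Ax (
      ((((A.imp UFml.bot).box).imp ((UFml.I A).imp (UFml.I UFml.bot)))).imp (
      (((UFml.I UFml.bot).imp (UFml.bot.box))).imp (
      (((UFml.bot.box).imp ((UFml.top.imp UFml.bot).box))).imp (
      (((UFml.I A).and UFml.top.dia).imp A.dia))))) := by
    apply IlMinus.taut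
    intro v hbot himp
    simp only [UFml.and, UFml.dia, UFml.neg, UFml.or, UFml.top, himp, hbot]
    cases v ((A.imp UFml.bot).box) <;>
      cases v (UFml.I A) <;>
        cases v (UFml.I UFml.bot) <;>
          cases v (UFml.bot.box) <;>
            cases v (((UFml.bot.imp UFml.bot).imp UFml.bot).box) <;> rfl
  exact .mp (.mp (.mp key T1) T2) T3
end

section
/- The logic il (with axioms G1', G2, G3, I1: I□⊥, I2: □(A→B)→(IA→IB), I3: I(A∨◇A)→IA, I4: IA∧◇⊤→◇A, and rules Modus Ponens and Necessitation) proves the schema uJ6: □⊥ ↔ I⊥. -/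
open UFml in
/-- Direction 1: □⊥ → I⊥. -/
private lemma il_dir1 : Il ((UFml.bot.box).imp (UFml.I UFml.bot)) := by
  -- h1 : □⊥ → □(□⊥→⊥)
  have t1 : Il (bot.imp ((bot.box).imp bot)) := by
    apply Il.taut; intro v hb hi; simp [hi, hb]
  have h1 : Il ((bot.box).imp (((bot.box).imp bot).box)) :=
    Il.mp (Il.G2 bot ((bot.box).imp bot)) (Il.nec t1)
  have h2 : Il ((((bot.box).imp bot).box).imp ((I (bot.box)).imp (I bot))) :=
    Il.I2 (bot.box) bot
  -- tautology: (p→q) → ((q→(r→s)) → (r → (p→s)))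
  have t2 : Il (((bot.box).imp (((bot.box).imp bot).box)).imp
      (((((bot.box).imp bot).box).imp ((I (bot.box)).imp (I bot))).imp
        ((I (bot.box)).imp ((bot.box).imp (I bot))))) := by
    apply Il.taut; intro v hb hi
    simp only [hi, hb]
    cases v (bot.box) <;> cases v (((bot.box).imp bot).box) <;>
      cases v (I (bot.box)) <;> cases v (I bot) <;> simp
  exact Il.mp (Il.mp (Il.mp t2 h1) h2) Il.I1

open UFml in
/-- Direction 2: I⊥ → □⊥. -/
private lemma il_dir2 : Il ((UFml.I UFml.bot).imp (UFml.bot.box)) := by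
  have p1 : Il ((bot.imp bot).box) := by
    apply Il.nec; apply Il.taut; intro v hb hi; simp [hi, hb]
  have p2 : Il ((top.neg.box).imp (bot.box)) := by
    refine Il.mp (Il.G2 top.neg bot) (Il.nec ?_)
    apply Il.taut; intro v hb hi; simp [UFml.neg, UFml.top, hi, hb]
  have h4 : Il (((UFml.I bot).and top.dia).imp (dia bot)) := Il.I4 bot
  -- tautology combining everything
  have t : Il ((((UFml.I bot).and top.dia).imp (dia bot)).imp
      (((bot.imp bot).box).imp (((top.neg.box).imp (bot.box)).imp
        ((UFml.I bot).imp (bot.box))))) := by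
    apply Il.taut; intro v hb hi
    simp only [UFml.and, UFml.dia, UFml.neg, hi, hb]
    cases v (UFml.I bot) <;> cases v ((bot.imp bot).box) <;>
      cases v (top.neg.box) <;> cases v (bot.box) <;> simp
  exact Il.mp (Il.mp (Il.mp t h4) p1) p2

/-- il proves the schema uJ6 : □⊥ ↔ I⊥ (both implications). -/
theorem il_proves_uJ6 :
    Il ((UFml.bot.box).imp (UFml.I UFml.bot)) ∧
      Il ((UFml.I UFml.bot).imp (UFml.bot.box)) :=
  ⟨il_dir1, il_dir2⟩
end

section
/- The schema uJ15: □(p ∨ ◇p) → Ip (where Ip := ⊤▷p) is not provable in IL⁻(J1). Concretely: in the IL⁻-model with W = {w,x,y}, R = {(w,x),(w,y),(x,y)}, S_w = {(x,x),(y,y)}, S_x = {(y,y)}, S_y = ∅, and p true exactly at y, the frame validates J1 (since x R y implies y S_x y for all x,y), but w does not satisfy □(p ∨ ◇p) → ⊤▷p. -/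
/-- The worlds of the counterexample model: 0 = w, 1 = x, 2 = y. -/
def R16 : Fin 3 → Fin 3 → Prop :=
  fun a b => (a = 0 ∧ b = 1) ∨ (a = 0 ∧ b = 2) ∨ (a = 1 ∧ b = 2)

/-- S_w = {(x,x),(y,y)}, S_x = {(y,y)}, S_y = ∅ (here `S16 w a b` means a S_w b). -/
def S16 : Fin 3 → Fin 3 → Fin 3 → Prop :=
  fun w a b => (w = 0 ∧ a = 1 ∧ b = 1) ∨ (w = 0 ∧ a = 2 ∧ b = 2) ∨
    (w = 1 ∧ a = 2 ∧ b = 2)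

/-- p is true exactly at y. -/
def V16 : Fin 3 → ℕ → Prop := fun a _ => a = 2

section Soundness

variable {W : Type} {R : W → W → Prop} {S : W → W → W → Prop} {V : W → ℕ → Prop}

theorem sat_and {w : W} {A B : Fml} :
    Sat R S V w (A.and B) ↔ Sat R S V w A ∧ Sat R S V w B := by
  simp only [Fml.and, Fml.neg, Sat]
  tauto

theorem sat_of_taut {A : Fml} (h : Taut A) (w : W) : Sat R S V w A := by
  classical
  simpa using h (fun B => decide (Sat R S V w B)) (decide_eq_false id) (fun B C => by
    by_cases hB : Sat R S V w B <;> by_cases hC : Sat R S V w C <;> simp [Sat, hB, hC])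

theorem sat_loeb (htrans : Transitive R) (hcwf : WellFounded (fun a b => R b a))
    (A : Fml) (w : W) : Sat R S V w ((((A.box).imp A).box).imp (A.box)) := by
  intro h x
  induction x using hcwf.induction with
  | _ x ih => exact fun hx => h x hx fun y hy => ih y hy (htrans hx hy)

theorem sat_J3 (A B C : Fml) (w : W) :
    Sat R S V w (((A.rhd C).and (B.rhd C)).imp ((A.or B).rhd C)) := by
  intro hAB x hx hAorB
  obtain ⟨hA, hB⟩ := sat_and.mp hAB
  by_cases hxA : Sat R S V x A
  · exact hA x hx hxA
  · exact hB x hx (hAorB hxA)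

theorem sat_J6b (A : Fml) (w : W) : Sat R S V w (((A.neg).rhd Fml.bot).imp (A.box)) := by
  intro h x hx
  by_contra hxA
  obtain ⟨_, _, hbot⟩ := h x hx hxA
  exact hbot

theorem ILMinus.sat {Ax : Fml → Prop} {A : Fml} (h : ILMinus Ax A)
    (hAx : ∀ B, Ax B → ∀ (V : W → ℕ → Prop) w, Sat R S V w B)
    (htrans : Transitive R) (hcwf : WellFounded (fun a b => R b a)) (V : W → ℕ → Prop) (w : W) :
    Sat R S V w A := by
  induction h generalizing w with
  | ax hB => exact hAx _ hB V w
  | taut hB => exact sat_of_taut hB w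
  | G2 A B => exact fun hAB hA x hx => hAB x hx (hA x hx)
  | G3 A => exact sat_loeb htrans hcwf A w
  | J3 A B C => exact sat_J3 A B C w
  | J6a A => exact fun hA x hx hnA => (hnA (hA x hx)).elim
  | J6b A => exact sat_J6b A w
  | mp _ _ ihAB ihA => exact ihAB w (ihA w)
  | nec _ ih => exact fun x _ => ih x
  | R1 C _ ih =>
    intro hCA x hx hC
    obtain ⟨y, hxy, hA⟩ := hCA x hx hC
    exact ⟨y, hxy, ih y hA⟩
  | R2 C _ ih => exact fun hBC x hx hA => hBC x hx (ih x hA)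

theorem sat_J1Ax (hJ1 : ∀ a b, R a b → S a b b) {A : Fml} (hA : J1Ax A)
    (V : W → ℕ → Prop) (w : W) : Sat R S V w A := by
  obtain ⟨B, C, rfl⟩ := hA
  exact fun hBC x hx hB => ⟨x, hJ1 w x hx, hBC x hx hB⟩

end Soundness

theorem R16_lt {a b : Fin 3} (h : R16 a b) : a < b := by
  revert a b
  unfold R16
  decide

theorem R16_trans : Transitive R16 := by
  unfold Transitive R16
  decide

theorem R16_converse_wellFounded : WellFounded (fun a b => R16 b a) :=
  wellFounded_gt.mono fun _ _ h => R16_lt h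

theorem S16_dom : ∀ w a b, S16 w a b → R16 w a := by
  unfold S16 R16
  decide

theorem S16_J1 : ∀ a b, R16 a b → S16 a b b := by
  unfold S16 R16
  decide

-- Every successor of w either is y, where p holds, or is x, which sees y.
theorem sat_box_or_dia_R16 :
    Sat R16 S16 V16 0 (((Fml.var 0).or (Fml.var 0).dia).box) := by
  rintro x (⟨-, rfl⟩ | ⟨-, rfl⟩ | ⟨h, -⟩)
  · exact fun _ hnp => hnp 2 (Or.inr (Or.inr ⟨rfl, rfl⟩)) rfl
  · exact fun hnp => (hnp rfl).elim
  · exact absurd h (by decide)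

-- The only S_w-successor of x is x itself, where p fails.
theorem not_sat_top_rhd_R16 : ¬ Sat R16 S16 V16 0 (Fml.top.rhd (Fml.var 0)) := by
  intro h
  obtain ⟨y, hxy, hy⟩ := h 1 (Or.inl ⟨rfl, rfl⟩) id
  rcases hxy with ⟨-, -, rfl⟩ | ⟨-, h, -⟩ | ⟨h, -⟩
  · exact (by decide : (1 : Fin 3) ≠ 2) hy
  · exact absurd h (by decide)
  · exact absurd h (by decide)

/-- The schema uJ15 : □(p ∨ ◇p) → Ip (with Ip := ⊤▷p) is not provable in IL⁻(J1).
Concretely, (Fin 3, R16, S16) is an IL⁻-frame satisfying the frame condition of J1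
(x R y implies y S_x y), yet the instance fails at the world w = 0 under V16. -/
theorem uJ15_unprovable_in_ILMinus_J1 :
    ¬ ILMinus J1Ax
        ((((Fml.var 0).or (Fml.var 0).dia).box).imp (Fml.top.rhd (Fml.var 0))) ∧
      Transitive R16 ∧
      WellFounded (fun a b => R16 b a) ∧
      (∀ w a b, S16 w a b → R16 w a) ∧
      (∀ a b, R16 a b → S16 a b b) ∧
      ¬ Sat R16 S16 V16 0
          ((((Fml.var 0).or (Fml.var 0).dia).box).imp (Fml.top.rhd (Fml.var 0))) := by
  have hfail : ¬ Sat R16 S16 V16 0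
      ((((Fml.var 0).or (Fml.var 0).dia).box).imp (Fml.top.rhd (Fml.var 0))) :=
    fun h => not_sat_top_rhd_R16 (h sat_box_or_dia_R16)
  refine ⟨fun hprov => hfail ?_, R16_trans, R16_converse_wellFounded, S16_dom, S16_J1, hfail⟩
  exact hprov.sat (fun _ => sat_J1Ax S16_J1) R16_trans R16_converse_wellFounded V16 0
end

section
/- Let ℓ be a logic in the language L(□,I) containing il⁻ and closed under its rules, Φ a finite adequate set, and Γ a Φ-maximally ℓ-consistent set. If ¬□C ∈ Γ, then there exists a Φ-maximally ℓ-consistent set Δ such that Γ ≺ Δ and both ∼C ∈ Δ and □C ∈ Δ, where Γ ≺ Δ means {B, □B : □B ∈ Γ} ⊆ Δ and there is □C' ∈ Δ with □C' ∉ Γ. -/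
namespace UFml

/-- ∼A : B if A is of the form ¬B (i.e. B → ⊥), and ¬A otherwise. -/
def sim : UFml → UFml
  | .imp B .bot => B
  | A => A.imp .bot

/-- The set of subformulas of a formula. -/
def subf : UFml → Finset UFml
  | .bot => {.bot}
  | .var n => {.var n}
  | .imp A B => insert (.imp A B) (A.subf ∪ B.subf)
  | .box A => insert (.box A) A.subf
  | .I A => insert (.I A) A.subf

end UFml

/-- Φ is an adequate set: closed under subformulas and ∼, ⊥ ∈ Φ_I
(i.e. I⊥ ∈ Φ), and for C, E ∈ Φ_I the boxed combinations
□C, □(C∨◇C), □(E→◇C), □(E→C), □(E→C∨◇C) are in Φ. -/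
def Adequate (Φ : Finset UFml) : Prop :=
  (∀ A ∈ Φ, A.subf ⊆ Φ) ∧
  (∀ A ∈ Φ, A.sim ∈ Φ) ∧
  (UFml.I UFml.bot ∈ Φ) ∧
  (∀ C E : UFml, UFml.I C ∈ Φ → UFml.I E ∈ Φ →
    C.box ∈ Φ ∧ (C.or C.dia).box ∈ Φ ∧ (E.imp C.dia).box ∈ Φ ∧
      (E.imp C).box ∈ Φ ∧ (E.imp (C.or C.dia)).box ∈ Φ)

/-- The conjunction of a finite set of formulas. -/
noncomputable def conj (X : Finset UFml) : UFml :=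
  X.toList.foldr UFml.and UFml.top

/-- A finite set X is ℓ-consistent if ℓ does not prove ⋀X → ⊥. -/
def LCons (ℓ : UFml → Prop) (X : Finset UFml) : Prop :=
  ¬ ℓ ((conj X).imp UFml.bot)

/-- Γ ⊆ Φ is Φ-maximally ℓ-consistent. -/
def MaxCons (ℓ : UFml → Prop) (Φ Γ : Finset UFml) : Prop :=
  Γ ⊆ Φ ∧ LCons ℓ Γ ∧ ∀ A ∈ Φ, A ∈ Γ ∨ A.sim ∈ Γ

/-- Γ ≺ Δ : {B, □B : □B ∈ Γ} ⊆ Δ and some □C' ∈ Δ with □C' ∉ Γ. -/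
def Prec (Γ Δ : Finset UFml) : Prop :=
  (∀ B : UFml, B.box ∈ Γ → B ∈ Δ ∧ B.box ∈ Δ) ∧
    ∃ C' : UFml, C'.box ∈ Δ ∧ C'.box ∉ Γ

/-!
Take for `Δ` a `Φ`-maximal consistent extension of `{B, □B : □B ∈ Γ} ∪ {□C, ∼C}`;
then `□C ∈ Δ \ Γ` makes `Γ ≺ Δ` strict. The base set is consistent: otherwise
`⊢ ⋀{B, □B : □B ∈ Γ} → (□C → C)`, so necessitation and Löb's axiom give
`⊢ □⋀{B, □B : □B ∈ Γ} → □C`. Since `□B → □□B` is derivable from Löb's axiom, `Γ` proves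
the antecedent, hence `□C`, contradicting `¬□C ∈ Γ`.
-/

namespace UFml

lemma val_sim {v : UFml → Bool} (h0 : v bot = false)
    (hv : ∀ B C : UFml, v (B.imp C) = (!(v B) || v C)) (A : UFml) :
    v A.sim = !v A := by
  unfold sim
  split <;> simp [hv, h0]

lemma mem_subf_self (A : UFml) : A ∈ A.subf := by
  cases A <;> simp [subf]

lemma mem_subf_box (A : UFml) : A ∈ A.box.subf := by
  simp [subf, mem_subf_self]

lemma mem_subf_neg (A : UFml) : A ∈ A.neg.subf := by
  simp [neg, subf, mem_subf_self]

end UFml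

open UFml

def boxPart (Γ : Finset UFml) : Finset UFml :=
  Γ.biUnion fun
    | .box B => {B, B.box}
    | _ => ∅

lemma mem_boxPart {Γ : Finset UFml} {A : UFml} :
    A ∈ boxPart Γ ↔ ∃ B, B.box ∈ Γ ∧ (A = B ∨ A = B.box) := by
  simp only [boxPart, Finset.mem_biUnion]
  constructor
  · rintro ⟨_ | _ | _ | B | _, hΓ, hA⟩ <;> simp only [Finset.notMem_empty] at hA
    simp only [Finset.mem_insert, Finset.mem_singleton] at hA
    exact ⟨B, hΓ, hA⟩
  · rintro ⟨B, hΓ, hA⟩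
    exact ⟨B.box, hΓ, by simpa using hA⟩

lemma boxPart_subset {Φ Γ : Finset UFml} (hΦ : ∀ A ∈ Φ, A.subf ⊆ Φ) (hΓ : Γ ⊆ Φ) :
    boxPart Γ ⊆ Φ := by
  intro A hA
  obtain ⟨B, hB, rfl | rfl⟩ := mem_boxPart.mp hA
  · exact hΦ _ (hΓ hB) (mem_subf_box _)
  · exact hΓ hB

lemma prec_of_boxPart_subset {Γ Δ : Finset UFml} {C : UFml} (hΓΔ : boxPart Γ ⊆ Δ)
    (hΔ : C.box ∈ Δ) (hΓ : C.box ∉ Γ) : Prec Γ Δ :=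
  ⟨fun B hB => ⟨hΓΔ (mem_boxPart.mpr ⟨B, hB, .inl rfl⟩), hΓΔ (mem_boxPart.mpr ⟨B, hB, .inr rfl⟩)⟩,
    C, hΔ, hΓ⟩

structure IsGLExtension (ℓ : UFml → Prop) : Prop where
  taut {A : UFml} : UTaut A → ℓ A
  K (A B : UFml) : ℓ (((A.imp B).box).imp ((A.box).imp (B.box)))
  loeb (A : UFml) : ℓ ((((A.box).imp A).box).imp (A.box))
  mp {A B : UFml} : ℓ (A.imp B) → ℓ A → ℓ B
  nec {A : UFml} : ℓ A → ℓ A.box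

lemma IsGLExtension.of_ilMinus {ℓ : UFml → Prop}
    (hIl : ∀ A : UFml, IlMinus (fun _ => False) A → ℓ A)
    (hMP : ∀ A B : UFml, ℓ (A.imp B) → ℓ A → ℓ B)
    (hNec : ∀ A : UFml, ℓ A → ℓ A.box) : IsGLExtension ℓ where
  taut h := hIl _ (.taut h)
  K A B := hIl _ (.G2 A B)
  loeb A := hIl _ (.G3 A)
  mp := hMP _ _
  nec := hNec _

namespace IsGLExtension

variable {ℓ : UFml → Prop} {G A B C : UFml}

lemma mp_taut (hℓ : IsGLExtension ℓ) (t : UTaut (A.imp B)) (h : ℓ A) : ℓ B :=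
  hℓ.mp (hℓ.taut t) h

lemma mp_taut₂ (hℓ : IsGLExtension ℓ) (t : UTaut (A.imp (B.imp C))) (hA : ℓ A) (hB : ℓ B) : ℓ C :=
  hℓ.mp (hℓ.mp_taut t hA) hB

lemma imp_trans (hℓ : IsGLExtension ℓ) (h₁ : ℓ (A.imp B)) (h₂ : ℓ (B.imp C)) : ℓ (A.imp C) :=
  hℓ.mp_taut₂ (by intro v _ hv; simp only [hv]; cases v A <;> cases v B <;> simp) h₁ h₂

lemma top (hℓ : IsGLExtension ℓ) : ℓ UFml.top :=
  hℓ.taut (by intro v h0 hv; simp [UFml.top, hv, h0])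

lemma imp_of (hℓ : IsGLExtension ℓ) (h : ℓ A) : ℓ (G.imp A) :=
  hℓ.mp_taut (by intro v _ hv; simp only [hv]; cases v A <;> simp) h

lemma imp_mp (hℓ : IsGLExtension ℓ) (h₁ : ℓ (G.imp (A.imp B))) (h₂ : ℓ (G.imp A)) : ℓ (G.imp B) :=
  hℓ.mp_taut₂ (by intro v _ hv; simp only [hv]; cases v G <;> cases v A <;> simp) h₁ h₂

lemma and_imp_left (hℓ : IsGLExtension ℓ) : ℓ ((A.and B).imp A) :=
  hℓ.taut (by intro v h0 hv; simp only [UFml.and, neg, hv, h0]; cases v A <;> simp)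

lemma and_imp_right (hℓ : IsGLExtension ℓ) : ℓ ((A.and B).imp B) :=
  hℓ.taut (by intro v h0 hv; simp only [UFml.and, neg, hv, h0]; cases v B <;> simp)

lemma imp_and (hℓ : IsGLExtension ℓ) (h₁ : ℓ (G.imp A)) (h₂ : ℓ (G.imp B)) : ℓ (G.imp (A.and B)) :=
  hℓ.mp_taut₂ (by
    intro v h0 hv; simp only [UFml.and, neg, hv, h0]
    cases v G <;> cases v A <;> cases v B <;> simp) h₁ h₂

lemma box_mono (hℓ : IsGLExtension ℓ) (h : ℓ (A.imp B)) : ℓ (A.box.imp B.box) :=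
  hℓ.mp (hℓ.K A B) (hℓ.nec h)

lemma box_imp_box_and (hℓ : IsGLExtension ℓ) : ℓ (A.box.imp (B.box.imp (A.and B).box)) := by
  have h : ℓ (A.imp (B.imp (A.and B))) := hℓ.taut (by
    intro v h0 hv; simp only [UFml.and, neg, hv, h0]
    cases v A <;> cases v B <;> simp)
  exact hℓ.imp_trans (hℓ.box_mono h) (hℓ.K B (A.and B))

/-- Löb's axiom applied to `A ∧ □A`. -/
lemma box_imp_box_box (hℓ : IsGLExtension ℓ) : ℓ (A.box.imp A.box.box) := by
  set D := A.and A.box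
  have hD : ℓ (A.imp (D.box.imp D)) :=
    hℓ.mp_taut (by
      intro v h0 hv; simp only [D, UFml.and, neg, hv, h0]
      cases v A <;> cases v A.box <;> cases v D.box <;> simp)
      (hℓ.box_mono (hℓ.and_imp_left (B := A.box)))
  have hAD : ℓ (A.box.imp D.box) := hℓ.imp_trans (hℓ.box_mono hD) (hℓ.loeb D)
  exact hℓ.imp_trans hAD (hℓ.box_mono hℓ.and_imp_right)

lemma imp_foldr_and (hℓ : IsGLExtension ℓ) {l : List UFml} (h : ∀ A ∈ l, ℓ (G.imp A)) :
    ℓ (G.imp (l.foldr UFml.and UFml.top)) := by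
  induction l with
  | nil => exact hℓ.imp_of hℓ.top
  | cons B l ih =>
    exact hℓ.imp_and (h B List.mem_cons_self) (ih fun A hA => h A (List.mem_cons_of_mem B hA))

lemma imp_box_foldr_and (hℓ : IsGLExtension ℓ) {l : List UFml} (h : ∀ A ∈ l, ℓ (G.imp A.box)) :
    ℓ (G.imp (l.foldr UFml.and UFml.top).box) := by
  induction l with
  | nil => exact hℓ.imp_of (hℓ.nec hℓ.top)
  | cons B l ih =>
    exact hℓ.imp_mp (hℓ.imp_trans (h B List.mem_cons_self) hℓ.box_imp_box_and)
      (ih fun A hA => h A (List.mem_cons_of_mem B hA))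

lemma foldr_and_imp (hℓ : IsGLExtension ℓ)
    {l : List UFml} (h : A ∈ l) : ℓ ((l.foldr UFml.and UFml.top).imp A) := by
  induction l with
  | nil => cases h
  | cons B l ih =>
    rcases List.mem_cons.mp h with rfl | h
    · exact hℓ.and_imp_left
    · exact hℓ.imp_trans hℓ.and_imp_right (ih h)

lemma conj_imp_of_mem (hℓ : IsGLExtension ℓ) {X : Finset UFml} (h : A ∈ X) : ℓ ((conj X).imp A) :=
  hℓ.foldr_and_imp (Finset.mem_toList.mpr h)

lemma imp_conj (hℓ : IsGLExtension ℓ)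
    {X : Finset UFml} (h : ∀ A ∈ X, ℓ (G.imp A)) : ℓ (G.imp (conj X)) :=
  hℓ.imp_foldr_and fun A hA => h A (Finset.mem_toList.mp hA)

lemma imp_box_conj (hℓ : IsGLExtension ℓ) {X : Finset UFml} (h : ∀ A ∈ X, ℓ (G.imp A.box)) :
    ℓ (G.imp (conj X).box) :=
  hℓ.imp_box_foldr_and fun A hA => h A (Finset.mem_toList.mp hA)

lemma conj_and_imp_conj_insert (hℓ : IsGLExtension ℓ) {X : Finset UFml} :
    ℓ (((conj X).and A).imp (conj (insert A X))) :=
  hℓ.imp_conj fun B hB => by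
    rcases Finset.mem_insert.mp hB with rfl | hB
    · exact hℓ.and_imp_right
    · exact hℓ.imp_trans hℓ.and_imp_left (hℓ.conj_imp_of_mem hB)

lemma conj_and_imp_bot_of_not_lcons_insert (hℓ : IsGLExtension ℓ) {X : Finset UFml}
    (h : ¬LCons ℓ (insert A X)) : ℓ (((conj X).and A).imp bot) :=
  hℓ.imp_trans hℓ.conj_and_imp_conj_insert (not_not.mp h)

lemma lcons_insert_or_insert_sim (hℓ : IsGLExtension ℓ)
    {X : Finset UFml} (hX : LCons ℓ X) (A : UFml) :
    LCons ℓ (insert A X) ∨ LCons ℓ (insert A.sim X) := by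
  by_contra! ⟨hA, hsim⟩
  refine hX (hℓ.mp_taut₂ ?_ (hℓ.conj_and_imp_bot_of_not_lcons_insert hA)
    (hℓ.conj_and_imp_bot_of_not_lcons_insert hsim))
  intro v h0 hv
  simp only [UFml.and, neg, hv, h0, val_sim h0 hv]
  cases v (conj X) <;> cases v A <;> simp

lemma notMem_of_neg_mem (hℓ : IsGLExtension ℓ)
    {X : Finset UFml} (hX : LCons ℓ X) (h : A.neg ∈ X) : A ∉ X :=
  fun hA => hX (hℓ.imp_mp (hℓ.conj_imp_of_mem h) (hℓ.conj_imp_of_mem hA))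

lemma exists_lcons_superset_deciding (hℓ : IsGLExtension ℓ)
    {Φ X : Finset UFml} (hsim : ∀ A ∈ Φ, A.sim ∈ Φ)
    (hXΦ : X ⊆ Φ) (hX : LCons ℓ X) {S : Finset UFml} (hSΦ : S ⊆ Φ) :
    ∃ Δ, X ⊆ Δ ∧ Δ ⊆ Φ ∧ LCons ℓ Δ ∧ ∀ A ∈ S, A ∈ Δ ∨ A.sim ∈ Δ := by
  classical
  induction S using Finset.induction_on generalizing X with
  | empty => exact ⟨X, subset_rfl, hXΦ, hX, by simp⟩
  | insert A S _ ih =>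
    have hA := hSΦ (Finset.mem_insert_self A S)
    obtain ⟨A', hA'Φ, hX', hA'⟩ :
        ∃ A', A' ∈ Φ ∧ LCons ℓ (insert A' X) ∧ (A' = A ∨ A' = A.sim) := by
      rcases hℓ.lcons_insert_or_insert_sim hX A with h | h
      exacts [⟨A, hA, h, .inl rfl⟩, ⟨A.sim, hsim A hA, h, .inr rfl⟩]
    obtain ⟨Δ, hXΔ, hΔΦ, hΔ, hS⟩ :=
      ih (Finset.insert_subset hA'Φ hXΦ) hX' ((Finset.subset_insert A S).trans hSΦ)
    have hA'Δ := hXΔ (Finset.mem_insert_self A' X)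
    refine ⟨Δ, (Finset.subset_insert _ _).trans hXΔ, hΔΦ, hΔ,
      Finset.forall_mem_insert _ _ _ |>.mpr ⟨?_, hS⟩⟩
    rcases hA' with rfl | rfl
    exacts [.inl hA'Δ, .inr hA'Δ]

lemma exists_maxCons_superset (hℓ : IsGLExtension ℓ) {Φ X : Finset UFml} (hsim : ∀ A ∈ Φ, A.sim ∈ Φ)
    (hXΦ : X ⊆ Φ) (hX : LCons ℓ X) : ∃ Δ, X ⊆ Δ ∧ MaxCons ℓ Φ Δ :=
  let ⟨Δ, hXΔ, hΔΦ, hΔ, hdec⟩ := hℓ.exists_lcons_superset_deciding hsim hXΦ hX subset_rfl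
  ⟨Δ, hXΔ, hΔΦ, hΔ, hdec⟩

lemma conj_imp_box_conj_boxPart (hℓ : IsGLExtension ℓ) (Γ : Finset UFml) :
    ℓ ((conj Γ).imp (conj (boxPart Γ)).box) :=
  hℓ.imp_box_conj fun A hA => by
    obtain ⟨B, hB, rfl | rfl⟩ := mem_boxPart.mp hA
    · exact hℓ.conj_imp_of_mem hB
    · exact hℓ.imp_trans (hℓ.conj_imp_of_mem hB) hℓ.box_imp_box_box

lemma lcons_insert_sim_insert_box_boxPart (hℓ : IsGLExtension ℓ) {Γ : Finset UFml} {C : UFml}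
    (hΓ : LCons ℓ Γ) (hC : C.box.neg ∈ Γ) :
    LCons ℓ (insert C.sim (insert C.box (boxPart Γ))) := by
  intro hincons
  set P := conj (boxPart Γ)
  set Q := conj (insert C.box (boxPart Γ))
  have hPC : ℓ (P.imp (C.box.imp C)) := by
    refine hℓ.mp_taut₂ ?_ (hℓ.conj_and_imp_bot_of_not_lcons_insert (not_not.mpr hincons))
      (hℓ.conj_and_imp_conj_insert (A := C.box) (X := boxPart Γ))
    intro v h0 hv
    simp only [UFml.and, neg, hv, h0, val_sim h0 hv]
    cases v P <;> cases v Q <;> cases v C.box <;> cases v C <;> simp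
  have hΓC : ℓ ((conj Γ).imp C.box) :=
    hℓ.imp_trans (hℓ.conj_imp_box_conj_boxPart Γ)
      (hℓ.imp_trans (hℓ.box_mono hPC) (hℓ.loeb C))
  exact hΓ (hℓ.imp_mp (hℓ.conj_imp_of_mem hC) hΓC)

end IsGLExtension

theorem exists_succ_with_box_general (ℓ : UFml → Prop)
    (hIl : ∀ A : UFml, IlMinus (fun _ => False) A → ℓ A)
    (hMP : ∀ A B : UFml, ℓ (A.imp B) → ℓ A → ℓ B)
    (hNec : ∀ A : UFml, ℓ A → ℓ A.box)
    (Φ Γ : Finset UFml) (C : UFml)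
    (hΦ : Adequate Φ) (hΓ : MaxCons ℓ Φ Γ)
    (hC : (C.box).neg ∈ Γ) :
    ∃ Δ : Finset UFml, MaxCons ℓ Φ Δ ∧ Prec Γ Δ ∧ C.sim ∈ Δ ∧ C.box ∈ Δ := by
  have hℓ := IsGLExtension.of_ilMinus hIl hMP hNec
  obtain ⟨hΓΦ, hΓcons, -⟩ := hΓ
  obtain ⟨hsubf, hsim, -⟩ := hΦ
  have hboxC : C.box ∈ Φ := hsubf _ (hΓΦ hC) (mem_subf_neg C.box)
  have hsimC : C.sim ∈ Φ := hsim C (hsubf _ hboxC (mem_subf_box C))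
  obtain ⟨Δ, hXΔ, hΔ⟩ := hℓ.exists_maxCons_superset hsim
    (Finset.insert_subset hsimC (Finset.insert_subset hboxC (boxPart_subset hsubf hΓΦ)))
    (hℓ.lcons_insert_sim_insert_box_boxPart hΓcons hC)
  obtain ⟨hsimΔ, hboxΔ, hPΔ⟩ := by simpa only [Finset.insert_subset_iff] using hXΔ
  exact ⟨Δ, hΔ, prec_of_boxPart_subset hPΔ hboxΔ (hℓ.notMem_of_neg_mem hΓcons hC), hsimΔ, hboxΔ⟩

/-- For any logic ℓ containing il⁻ and closed under its rules, any finite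
adequate set Φ, and any Φ-maximally ℓ-consistent Γ with ¬□C ∈ Γ, there is a
Φ-maximally ℓ-consistent Δ with Γ ≺ Δ, ∼C ∈ Δ and □C ∈ Δ. -/
theorem exists_succ_with_box (ℓ : UFml → Prop)
    (hIl : ∀ A : UFml, IlMinus (fun _ => False) A → ℓ A)
    (hMP : ∀ A B : UFml, ℓ (A.imp B) → ℓ A → ℓ B)
    (hNec : ∀ A : UFml, ℓ A → ℓ A.box)
    (hUR : ∀ A B : UFml, ℓ (A.imp B) → ℓ ((UFml.I A).imp (UFml.I B)))
    (Φ Γ : Finset UFml) (C : UFml)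
    (hΦ : Adequate Φ) (hΓ : MaxCons ℓ Φ Γ)
    (hC : (C.box).neg ∈ Γ) :
    ∃ Δ : Finset UFml, MaxCons ℓ Φ Δ ∧ Prec Γ Δ ∧ C.sim ∈ Δ ∧ C.box ∈ Δ :=
  exists_succ_with_box_general ℓ hIl hMP hNec Φ Γ C hΦ hΓ hC
end
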